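/- arXiv:2010.05174 — 5 statements merged into one kernel-verified Lean document; each statement's English description precedes it below -/
import Mathlib

section
/- The limit as n → ∞ of the sum ∑_{k=1}^{n-1} (-1)^k · cos((2k-1)π/(4n-2)) equals -1/2. -/
/-!
Multiplying the sum by `2 cos θ` makes it telescope, since
`2 cos θ cos ((2k-1)θ) = cos (2kθ) + cos (2(k-1)θ)`:
`2 cos θ · ∑_{k=1}^{m} (-1)^k cos ((2k-1)θ) = (-1)^m cos (2mθ) - 1`.
For `θ = π/(4n-2)` and `m = n - 1` one has `2mθ = π/2 - θ`, so the sum equals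
`((-1)^(n-1) sin θ - 1) / (2 cos θ)`, which tends to `-1/2` because `θ → 0`.
-/

open Real Filter Finset

theorem two_mul_cos_mul_sum_neg_one_pow_mul_cos (θ : ℝ) (m : ℕ) :
    2 * cos θ * ∑ k ∈ Icc 1 m, (-1 : ℝ) ^ k * cos ((2 * (k : ℝ) - 1) * θ)
      = (-1) ^ m * cos (2 * (m : ℝ) * θ) - 1 := by
  induction m with
  | zero => simp
  | succ m ih =>
    have hprod : 2 * cos θ * cos ((2 * ((m + 1 : ℕ) : ℝ) - 1) * θ)
        = cos (2 * ((m + 1 : ℕ) : ℝ) * θ) + cos (2 * (m : ℝ) * θ) := by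
      have hup : 2 * ((m + 1 : ℕ) : ℝ) * θ = (2 * m + 1) * θ + θ := by push_cast; ring
      have hdown : 2 * (m : ℝ) * θ = (2 * m + 1) * θ - θ := by ring
      have hmid : (2 * ((m + 1 : ℕ) : ℝ) - 1) * θ = (2 * m + 1) * θ := by push_cast; ring
      rw [hup, hdown, hmid, cos_add, cos_sub]
      ring
    rw [sum_Icc_succ_top (by omega), mul_add, ih]
    linear_combination (-1 : ℝ) ^ (m + 1) * hprod

theorem sum_neg_one_pow_mul_cos_odd_mul_pi_div (n : ℕ) (hn : 2 ≤ n) :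
    ∑ k ∈ Icc 1 (n - 1), (-1 : ℝ) ^ k * cos ((2 * (k : ℝ) - 1) * π / (4 * n - 2))
      = ((-1) ^ (n - 1) * sin (π / (4 * n - 2)) - 1) / (2 * cos (π / (4 * n - 2))) := by
  have hn' : (2 : ℝ) ≤ n := by exact_mod_cast hn
  set θ := π / (4 * n - 2) with hθ
  have hθ_pos : 0 < θ := div_pos pi_pos (by linarith)
  have hθ_lt : θ < π / 2 := div_lt_div_of_pos_left pi_pos two_pos (by linarith)
  have hcos : 0 < cos θ := cos_pos_of_mem_Ioo ⟨by linarith, hθ_lt⟩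
  have hangle : 2 * ((n - 1 : ℕ) : ℝ) * θ = π / 2 - θ := by
    rw [Nat.cast_sub (by omega), eq_sub_iff_add_eq, ← add_one_mul, hθ, mul_div_assoc', mul_comm,
      div_eq_iff (by linarith)]
    push_cast
    ring
  have hterm (k : ℕ) : (2 * (k : ℝ) - 1) * π / (4 * n - 2) = (2 * (k : ℝ) - 1) * θ := by
    rw [hθ, mul_div_assoc]
  have key := two_mul_cos_mul_sum_neg_one_pow_mul_cos θ (n - 1)
  rw [hangle, cos_pi_div_two_sub] at key
  simp only [hterm]
  rw [eq_div_iff (by positivity), ← key]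
  ring

theorem stmt0 :
    Tendsto (fun n : ℕ =>
      ∑ k ∈ Finset.Icc 1 (n - 1),
        (-1 : ℝ) ^ k * Real.cos ((2 * (k : ℝ) - 1) * Real.pi / (4 * (n : ℝ) - 2)))
      atTop (nhds (-1 / 2)) := by
  have hθ : Tendsto (fun n : ℕ => π / (4 * (n : ℝ) - 2)) atTop (nhds 0) :=
    tendsto_const_nhds.div_atTop <| tendsto_atTop_add_const_right _ (-2)
      ((tendsto_natCast_atTop_atTop (R := ℝ)).const_mul_atTop (by norm_num))
  have hsin : Tendsto (fun n : ℕ => (-1 : ℝ) ^ (n - 1) * sin (π / (4 * (n : ℝ) - 2)))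
      atTop (nhds 0) := by
    have hsinθ := ((continuous_sin.tendsto 0).comp hθ).norm
    rw [sin_zero, norm_zero] at hsinθ
    exact squeeze_zero_norm (fun n => by simp) hsinθ
  have hcos := (continuous_cos.tendsto 0).comp hθ
  rw [cos_zero] at hcos
  have hlim := (hsin.sub_const 1).div (hcos.const_mul 2) (by norm_num)
  rw [show (0 - 1) / (2 * 1 : ℝ) = -1 / 2 by norm_num] at hlim
  refine hlim.congr' ?_
  filter_upwards [eventually_ge_atTop 2] with n hn
  exact (sum_neg_one_pow_mul_cos_odd_mul_pi_div n hn).symm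
end

section
/- The limit as n → ∞ of 4 + 4·∑_{k=1}^{n-1} (-1)^k · cos((2k-1)π/(4n-2)) equals 2. -/
/-!
Multiplying by `2 cos θ` turns each term into `cos (2kθ) + cos ((2k-2)θ)`, so the alternating
sum `∑_{k=1}^{m} (-1)^k cos ((2k-1)θ)` telescopes to `((-1)^m cos (2mθ) - 1) / (2 cos θ)`.
For `θ = π/(4n-2)` and `m = n-1` we have `2mθ = π/2 - θ`, so the sum is
`((-1)^(n-1) sin θ - 1) / (2 cos θ)`, which tends to `-1/2` as `θ → 0`.
-/

open Real Filter Finset Topology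

lemma two_cos_mul_sum_neg_one_pow_mul_cos (θ : ℝ) (m : ℕ) :
    2 * cos θ * ∑ k ∈ Icc 1 m, (-1 : ℝ) ^ k * cos ((2 * (k : ℝ) - 1) * θ) =
      (-1) ^ m * cos (2 * m * θ) - 1 := by
  induction m with
  | zero => simp
  | succ m ih =>
    have product_to_sum : 2 * cos θ * cos ((2 * ((m + 1 : ℕ) : ℝ) - 1) * θ) =
        cos (2 * ((m + 1 : ℕ) : ℝ) * θ) + cos (2 * m * θ) := by
      push_cast
      rw [show (2 * ((m : ℝ) + 1) - 1) * θ = (2 * m + 1) * θ by ring,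
        show 2 * ((m : ℝ) + 1) * θ = (2 * m + 1) * θ + θ by ring,
        show 2 * (m : ℝ) * θ = (2 * m + 1) * θ - θ by ring, cos_add, cos_sub]
      ring
    rw [sum_Icc_succ_top (Nat.le_add_left 1 m), mul_add, ih, pow_succ]
    linear_combination -(-1 : ℝ) ^ m * product_to_sum

lemma two_cos_mul_sum_eq_neg_one_pow_mul_sin (n : ℕ) (hn : 1 ≤ n) :
    2 * cos (π / (4 * n - 2)) *
        ∑ k ∈ Icc 1 (n - 1), (-1 : ℝ) ^ k * cos ((2 * (k : ℝ) - 1) * π / (4 * n - 2)) =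
      (-1) ^ (n - 1) * sin (π / (4 * n - 2)) - 1 := by
  have hden : (4 * n - 2 : ℝ) ≠ 0 := by
    have : (1 : ℝ) ≤ n := by exact_mod_cast hn
    linarith
  have hangle : 2 * ((n - 1 : ℕ) : ℝ) * (π / (4 * n - 2)) = π / 2 - π / (4 * n - 2) := by
    rw [Nat.cast_sub hn]
    linear_combination (π / 2) * mul_inv_cancel₀ hden
  simp_rw [mul_div_assoc]
  rw [two_cos_mul_sum_neg_one_pow_mul_cos, hangle, cos_pi_div_two_sub]

theorem stmt1 :
    Tendsto (fun n : ℕ =>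
      4 + 4 * ∑ k ∈ Finset.Icc 1 (n - 1),
        (-1 : ℝ) ^ k * Real.cos ((2 * (k : ℝ) - 1) * Real.pi / (4 * (n : ℝ) - 2)))
      atTop (nhds 2) := by
  have hθ : Tendsto (fun n : ℕ => π / (4 * (n : ℝ) - 2)) atTop (𝓝 0) :=
    tendsto_const_nhds.div_atTop <| tendsto_atTop_add_const_right _ _ <|
      tendsto_natCast_atTop_atTop.const_mul_atTop four_pos
  have hcos : Tendsto (fun n : ℕ => 2 * cos (π / (4 * (n : ℝ) - 2))) atTop (𝓝 2) := by
    simpa using ((continuous_cos.tendsto 0).comp hθ).const_mul 2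
  have hnum : Tendsto (fun n : ℕ => (-1 : ℝ) ^ (n - 1) * sin (π / (4 * (n : ℝ) - 2)) - 1)
      atTop (𝓝 (-1)) := by
    have hsin : Tendsto (fun n : ℕ => sin (π / (4 * (n : ℝ) - 2))) atTop (𝓝 0) := by
      simpa [Function.comp_def] using (continuous_sin.tendsto 0).comp hθ
    have hsign : IsBoundedUnder (· ≤ ·) atTop fun n : ℕ => ‖(-1 : ℝ) ^ (n - 1)‖ :=
      isBoundedUnder_of ⟨1, fun n => by simp⟩
    simpa using (isBoundedUnder_le_mul_tendsto_zero hsign hsin).sub_const 1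
  have hsum : Tendsto (fun n : ℕ => ∑ k ∈ Icc 1 (n - 1),
      (-1 : ℝ) ^ k * cos ((2 * (k : ℝ) - 1) * π / (4 * n - 2))) atTop (𝓝 (-1 / 2)) := by
    refine (hnum.div hcos two_ne_zero).congr' ?_
    filter_upwards [hcos.eventually_ne two_ne_zero, eventually_ge_atTop 1] with n hc hn
    rw [Pi.div_apply, div_eq_iff hc, ← two_cos_mul_sum_eq_neg_one_pow_mul_sin n hn, mul_comm]
  convert (hsum.const_mul 4).const_add 4 using 2
  norm_num
end

section
/- For natural numbers n with n ≡ 1 (mod 4) and n ≥ 5, and for every integer k with (n+3)/4 ≤ k ≤ (n-1)/2, one has cos((2k-1)π/(2n-2)) < cos(kπ/(n+1)). -/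
open Real

theorem stmt3 (n : ℕ) (h4 : n % 4 = 1) (hn : 5 ≤ n) (k : ℕ)
    (hk1 : (n + 3) / 4 ≤ k) (hk2 : k ≤ (n - 1) / 2) :
    Real.cos ((2 * (k : ℝ) - 1) * Real.pi / (2 * (n : ℝ) - 2)) <
      Real.cos ((k : ℝ) * Real.pi / ((n : ℝ) + 1)) := by
  have h4k : n + 3 ≤ 4 * k := by omega
  have h2k : 2 * k ≤ n - 1 := by omega
  have hkn : 2 * (k : ℝ) + 1 ≤ (n : ℝ) := by
    have : 2 * k + 1 ≤ n := by omega
    exact_mod_cast this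
  have h4kr : (n : ℝ) + 3 ≤ 4 * k := by exact_mod_cast h4k
  have hnr : (5 : ℝ) ≤ (n : ℝ) := by exact_mod_cast hn
  have hpi := Real.pi_pos
  apply Real.cos_lt_cos_of_nonneg_of_le_pi
  · positivity
  · rw [div_le_iff₀ (by linarith)]
    nlinarith [hpi, hkn, hnr]
  · rw [div_lt_div_iff₀ (by linarith) (by linarith)]
    nlinarith [hpi, h4kr, hnr]
end

section
/- The limit as m → ∞ (with n = 4m+1) of 4·(∑_{k=1}^{(n-1)/4} (cos((2k-1)π/(2n-2)) − cos(kπ/(n+1))) + ∑_{k=(n+3)/4}^{(n-1)/2} (cos(kπ/(n+1)) − cos((2k-1)π/(2n-2)))) equals (8 − 8√2 + 2π)/π. -/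
/-!
Multiplied by a sine, both kinds of sums telescope: with `A = π / (8m)` and `C = π / (8m + 4)`,
`2 sin A ∑_{a<k≤b} cos ((2k-1)A) = sin (2bA) - sin (2aA)` and
`2 sin C ∑_{a<k≤b} cos (2kC) = sin ((2b+1)C) - sin ((2a+1)C)`,
and for the endpoints `a, b ∈ {0, m, 2m}` the arguments are `0`, `π/4`, `π/2` and `π/2 - C`.
The whole expression collapses to `2(√2 - 1)(1/sin A - 1/sin C) + 2 - 2 sin C / (1 + cos C)`,
the last term being `2 tan (C/2)`. Since `1/sin x - 1/x → 0` and `1/A - 1/C = -4/π`,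
it tends to `2 - 8(√2 - 1)/π`.
-/

open Real Filter Finset Topology

theorem sum_Ioc_eq_sub_of_telescoping {M : Type*} [AddCommGroup M] {f g : ℕ → M}
    (h : ∀ k, g (k + 1) = f (k + 1) - f k) {a b : ℕ} (hab : a ≤ b) :
    ∑ k ∈ Ioc a b, g k = f b - f a := by
  induction b, hab using Nat.le_induction with
  | base => simp
  | succ n han ih => rw [sum_Ioc_succ_top han, ih, h]; abel

theorem two_mul_sin_mul_sum_Ioc_cos_two_mul_sub_one (θ : ℝ) {a b : ℕ} (hab : a ≤ b) :
    2 * sin θ * ∑ k ∈ Ioc a b, cos ((2 * k - 1) * θ) = sin (2 * b * θ) - sin (2 * a * θ) := by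
  rw [mul_sum]
  refine sum_Ioc_eq_sub_of_telescoping (f := fun k : ℕ => sin (2 * k * θ)) (fun k => ?_) hab
  rw [sin_sub_sin]
  push_cast
  ring_nf

theorem two_mul_sin_mul_sum_Ioc_cos_two_mul (θ : ℝ) {a b : ℕ} (hab : a ≤ b) :
    2 * sin θ * ∑ k ∈ Ioc a b, cos (2 * k * θ) =
      sin ((2 * b + 1) * θ) - sin ((2 * a + 1) * θ) := by
  rw [mul_sum]
  refine sum_Ioc_eq_sub_of_telescoping (f := fun k : ℕ => sin ((2 * k + 1) * θ)) (fun k => ?_) hab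
  rw [sin_sub_sin]
  push_cast
  ring_nf

theorem tendsto_inv_sin_sub_inv : Tendsto (fun x => (sin x)⁻¹ - x⁻¹) (𝓝[>] 0) (𝓝 0) := by
  have hlin : Tendsto (fun x : ℝ => x / 5) (𝓝[>] 0) (𝓝 0) := by
    simpa using ((continuous_id.div_const (5 : ℝ)).tendsto 0).mono_left nhdsWithin_le_nhds
  have hbound : ∀ᶠ x in 𝓝[>] (0 : ℝ), 0 ≤ (sin x)⁻¹ - x⁻¹ ∧ (sin x)⁻¹ - x⁻¹ ≤ x / 5 := by
    filter_upwards [Ioc_mem_nhdsGT (show (0 : ℝ) < 1 by norm_num)] with x ⟨hx0, hx1⟩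
    have hsin : 0 < sin x := sin_pos_of_pos_of_lt_pi hx0 (by linarith [pi_gt_three])
    have hcube := sin_gt_sub_cube hx0
    rw [inv_sub_inv hsin.ne' hx0.ne', div_le_div_iff₀ (by positivity) (by norm_num)]
    refine ⟨div_nonneg (by linarith [sin_le hx0.le]) (by positivity), ?_⟩
    nlinarith [mul_lt_mul_of_pos_left hcube (mul_pos hx0 hx0),
      pow_le_pow_of_le_one hx0.le hx1 (show 3 ≤ 5 by norm_num)]
  exact tendsto_of_tendsto_of_tendsto_of_le_of_le' tendsto_const_nhds hlin
    (hbound.mono fun _ h => h.1) (hbound.mono fun _ h => h.2)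

theorem tendsto_pi_div_nhdsGT {c : ℝ} (hc : 0 ≤ c) :
    Tendsto (fun m : ℕ => π / (8 * m + c)) atTop (𝓝[>] 0) := by
  refine tendsto_nhdsWithin_iff.mpr ⟨tendsto_const_nhds.div_atTop ?_, ?_⟩
  · exact tendsto_atTop_add_const_right _ c
      ((tendsto_natCast_atTop_atTop (R := ℝ)).const_mul_atTop (by norm_num))
  · filter_upwards [eventually_ge_atTop 1] with m hm
    have : (1 : ℝ) ≤ m := by exact_mod_cast hm
    exact div_pos pi_pos (by linarith)

theorem four_mul_cos_sums_eq_closed_form {m : ℕ} (hm : 1 ≤ m) :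
    4 * ((∑ k ∈ Icc 1 m,
            (cos ((2 * (k : ℝ) - 1) * π / (2 * (4 * (m : ℝ) + 1) - 2)) -
              cos ((k : ℝ) * π / ((4 * (m : ℝ) + 1) + 1)))) +
          ∑ k ∈ Icc (m + 1) (2 * m),
            (cos ((k : ℝ) * π / ((4 * (m : ℝ) + 1) + 1)) -
              cos ((2 * (k : ℝ) - 1) * π / (2 * (4 * (m : ℝ) + 1) - 2)))) =
      2 * (√2 - 1) * ((sin (π / (8 * m)))⁻¹ - (sin (π / (8 * m + 4)))⁻¹) + 2 -
        2 * (sin (π / (8 * m + 4)) / (1 + cos (π / (8 * m + 4)))) := by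
  have hm' : (1 : ℝ) ≤ m := by exact_mod_cast hm
  set A := π / (8 * m) with hA
  set C := π / (8 * m + 4) with hC
  have hA_arg (x : ℝ) : x * π / (2 * (4 * m + 1) - 2) = x * A := by
    rw [hA]; field_simp; ring
  have hC_arg (x : ℝ) : x * π / ((4 * m + 1) + 1) = 2 * x * C := by
    rw [hC]; field_simp; ring
  simp only [hA_arg, hC_arg]
  rw [show Icc 1 m = Ioc 0 m from Icc_succ_left_eq_Ioc 0 m, Icc_add_one_left_eq_Ioc,
    sum_sub_distrib, sum_sub_distrib]
  have hsA : 0 < sin A :=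
    sin_pos_of_pos_of_lt_pi (by positivity) (div_lt_self pi_pos (by linarith))
  have hC0 : 0 < C := by positivity
  have hsC : 0 < sin C := sin_pos_of_pos_of_lt_pi hC0 (div_lt_self pi_pos (by linarith))
  have hC_lt : C < π / 2 := div_lt_div_of_pos_left pi_pos (by norm_num) (by linarith)
  have hcC : 0 < cos C := cos_pos_of_mem_Ioo ⟨by linarith, hC_lt⟩
  have hmm : m ≤ 2 * m := by omega
  have s1 := two_mul_sin_mul_sum_Ioc_cos_two_mul_sub_one A m.zero_le
  have s2 := two_mul_sin_mul_sum_Ioc_cos_two_mul_sub_one A hmm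
  have e1 := two_mul_sin_mul_sum_Ioc_cos_two_mul C m.zero_le
  have e2 := two_mul_sin_mul_sum_Ioc_cos_two_mul C hmm
  have v1 : 2 * (m : ℝ) * A = π / 4 := by rw [hA]; field_simp; ring
  have v2 : 2 * ((2 * m : ℕ) : ℝ) * A = π / 2 := by rw [hA]; push_cast; field_simp; ring
  have v3 : (2 * (m : ℝ) + 1) * C = π / 4 := by rw [hC]; field_simp; ring
  have v4 : (2 * ((2 * m : ℕ) : ℝ) + 1) * C = π / 2 - C := by
    rw [hC]; push_cast; field_simp; ring
  simp only [v1, v2, v3, v4, CharP.cast_eq_zero, mul_zero, zero_mul, zero_add, one_mul, sin_zero,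
    sub_zero, sin_pi_div_four, sin_pi_div_two, sin_pi_div_two_sub] at s1 s2 e1 e2
  rw [mul_comm, ← eq_div_iff (by positivity)] at s1 s2 e1 e2
  rw [s1, s2, e1, e2]
  field_simp
  linear_combination (8 * sin A) * sin_sq_add_cos_sq C

theorem tendsto_cos_sums_closed_form :
    Tendsto (fun m : ℕ =>
      2 * (√2 - 1) * ((sin (π / (8 * m)))⁻¹ - (sin (π / (8 * m + 4)))⁻¹) + 2 -
        2 * (sin (π / (8 * m + 4)) / (1 + cos (π / (8 * m + 4)))))
      atTop (𝓝 ((8 - 8 * √2 + 2 * π) / π)) := by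
  have hA : Tendsto (fun m : ℕ => π / (8 * m)) atTop (𝓝[>] 0) := by
    simpa using tendsto_pi_div_nhdsGT (c := 0) le_rfl
  have hC := tendsto_pi_div_nhdsGT (c := 4) (by norm_num)
  have hdiff : Tendsto (fun m : ℕ => (sin (π / (8 * m)))⁻¹ - (sin (π / (8 * m + 4)))⁻¹) atTop
      (𝓝 (0 - 0 + -4 / π)) := by
    refine (((tendsto_inv_sin_sub_inv.comp hA).sub
      (tendsto_inv_sin_sub_inv.comp hC)).add_const (-4 / π)).congr fun m => ?_
    simp only [Function.comp_apply, inv_div]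
    ring
  have htan_half : Tendsto (fun m : ℕ => sin (π / (8 * m + 4)) / (1 + cos (π / (8 * m + 4))))
      atTop (𝓝 0) := by
    have hcont : ContinuousAt (fun x => sin x / (1 + cos x)) 0 :=
      continuous_sin.continuousAt.div (continuous_const.add continuous_cos).continuousAt
        (by norm_num)
    simpa [Function.comp_def] using hcont.tendsto.comp (hC.mono_right nhdsWithin_le_nhds)
  convert ((hdiff.const_mul (2 * (√2 - 1))).add_const 2).sub (htan_half.const_mul 2) using 2
  field_simp [pi_ne_zero]
  ring

theorem stmt6 :
    Tendsto (fun m : ℕ =>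
      (4 : ℝ) *
        ((∑ k ∈ Finset.Icc 1 ((4 * m + 1 - 1) / 4),
            (Real.cos ((2 * (k : ℝ) - 1) * Real.pi / (2 * (4 * (m : ℝ) + 1) - 2)) -
              Real.cos ((k : ℝ) * Real.pi / ((4 * (m : ℝ) + 1) + 1)))) +
          ∑ k ∈ Finset.Icc ((4 * m + 1 + 3) / 4) ((4 * m + 1 - 1) / 2),
            (Real.cos ((k : ℝ) * Real.pi / ((4 * (m : ℝ) + 1) + 1)) -
              Real.cos ((2 * (k : ℝ) - 1) * Real.pi / (2 * (4 * (m : ℝ) + 1) - 2)))))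
      atTop (nhds ((8 - 8 * Real.sqrt 2 + 2 * Real.pi) / Real.pi)) := by
  refine tendsto_cos_sums_closed_form.congr' ?_
  filter_upwards [eventually_ge_atTop 1] with m hm
  rw [show (4 * m + 1 - 1) / 4 = m by omega, show (4 * m + 1 + 3) / 4 = m + 1 by omega,
    show (4 * m + 1 - 1) / 2 = 2 * m by omega, four_mul_cos_sums_eq_closed_form hm]
end

section
/- Define σ(n) = 4·∑_{k=1}^{n-1} (-1)^k cos((2k-1)π/(4n-2)) + 4. Then σ(n) equals the ℓ¹-distance between the decreasingly sorted eigenvalue sequences of the adjacency matrices of C_{2n} and Z_{2n}, where Z_{2n} has eigenvalues 0 together with 2cos((2k-1)π/(4n-2)) for k = 1, …, 2n−1. -/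
open Real Finset

/-!
The sorted spectra are explicit: the `i`-th largest eigenvalue of `C_{2n}` is `2cos(⌈i/2⌉π/n)`
and that of `Z_{2n}` is `2cos(tᵢπ/(4n-2))`. Both sequences are odd under `i ↦ 2n-1-i`, so the
distance is twice the sum over the first half. There the two sequences interlace, the cycle
eigenvalue being the larger one exactly at even `i`, so `|λᵢ - μᵢ| = (-1)ⁱ(λᵢ - μᵢ)`. The
alternating sum of the cycle eigenvalues telescopes to `2`, and that of the tree eigenvalues is
the sum in the statement.
-/

noncomputable def twoCosPiDiv (d : ℝ) (j : ℕ) : ℝ := 2 * cos (j * π / d)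

section twoCosPiDiv

variable {d e : ℝ} {j k : ℕ}

lemma twoCosPiDiv_le_twoCosPiDiv (hd : 0 < d) (he : 0 < e) (hjk : j * e ≤ k * d)
    (hk : k ≤ e) : twoCosPiDiv e k ≤ twoCosPiDiv d j := by
  have hangle : (j : ℝ) * π / d ≤ k * π / e := by
    rw [div_le_div_iff₀ hd he]
    nlinarith [pi_pos]
  have hle_pi : (k : ℝ) * π / e ≤ π := by
    rw [div_le_iff₀ he]
    nlinarith [pi_pos]
  have := cos_le_cos_of_nonneg_of_le_pi (by positivity) hle_pi hangle
  unfold twoCosPiDiv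
  linarith

lemma twoCosPiDiv_anti (hd : 0 < d) (hjk : j ≤ k) (hk : k ≤ d) :
    twoCosPiDiv d k ≤ twoCosPiDiv d j :=
  twoCosPiDiv_le_twoCosPiDiv hd hd (by gcongr) hk

lemma twoCosPiDiv_zero : twoCosPiDiv d 0 = 2 := by
  simp [twoCosPiDiv]

lemma twoCosPiDiv_of_add_eq (hd : d ≠ 0) (h : (j : ℝ) + k = d) :
    twoCosPiDiv d k = -twoCosPiDiv d j := by
  have : (k : ℝ) * π / d = π - j * π / d := by
    field_simp
    linarith
  rw [twoCosPiDiv, twoCosPiDiv, this, cos_pi_sub]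
  ring

lemma twoCosPiDiv_of_add_eq_two_mul (hd : d ≠ 0) (h : (j : ℝ) + k = 2 * d) :
    twoCosPiDiv d k = twoCosPiDiv d j := by
  have : (k : ℝ) * π / d = 2 * π - j * π / d := by
    field_simp
    linarith
  rw [twoCosPiDiv, twoCosPiDiv, this, cos_two_pi_sub]

lemma twoCosPiDiv_of_two_mul_eq (hd : d ≠ 0) (h : 2 * (j : ℝ) = d) : twoCosPiDiv d j = 0 := by
  have : (j : ℝ) * π / d = π / 2 := by
    rw [div_eq_div_iff hd two_ne_zero, ← h]
    ring
  rw [twoCosPiDiv, this, cos_pi_div_two, mul_zero]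

end twoCosPiDiv

lemma pairwise_ge_map_range {α : Type*} [Preorder α] {N : ℕ} {f : ℕ → α}
    (hf : ∀ i j, i ≤ j → j < N → f j ≤ f i) : ((List.range N).map f).Pairwise (· ≥ ·) :=
  List.pairwise_map.2 <| List.pairwise_lt_range.imp_of_mem fun _ hj hij =>
    hf _ _ hij.le (List.mem_range.1 hj)

lemma perm_map_range_two_mul {α : Type*} (f : ℕ → α) (N : ℕ) :
    ((List.range (2 * N)).map f).Perm
      ((List.range N).map (fun m => f (2 * m)) ++ (List.range N).map (fun m => f (2 * m + 1))) := by
  induction N with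
  | zero => simp
  | succ N ih =>
    rw [show 2 * (N + 1) = 2 * N + 1 + 1 by ring, List.range_succ, List.range_succ,
      List.range_succ]
    simp only [List.map_append, List.map_cons, List.map_nil, List.append_assoc]
    refine (ih.append_right _).trans ?_
    simp only [List.append_assoc, List.singleton_append]
    exact List.Perm.append_left _ List.perm_middle

lemma perm_map_range_reverse {α : Type*} (f : ℕ → α) (N : ℕ) :
    ((List.range N).map (fun k => f (N - 1 - k))).Perm ((List.range N).map f) := by
  have : (List.range N).map (fun k => f (N - 1 - k)) = ((List.range N).map f).reverse := by
    rw [← List.map_reverse, List.range_eq_range', List.reverse_range', List.map_map,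
      List.range_eq_range']
    simp [Function.comp_def]
  exact this ▸ List.reverse_perm _

lemma perm_map_range_succ_of_reflect {α : Type*} {N : ℕ} {f : ℕ → α}
    (hf : ∀ j < N, f (2 * N - j) = f j) :
    ((List.range (2 * N)).map (fun k => f (k + 1))).Perm
      ((List.range (2 * N)).map (fun i => f ((i + 1) / 2))) := by
  have hgiven : (List.range (2 * N)).map (fun k => f (k + 1)) =
      (List.range N).map (fun k => f (k + 1)) ++ (List.range N).map (fun k => f (N - 1 - k)) := by
    rw [two_mul, List.range_add, List.map_append, List.map_map]
    congr 1
    refine List.map_congr_left fun k hk => ?_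
    have hk := List.mem_range.1 hk
    rw [Function.comp_apply, ← hf (N - 1 - k) (by omega)]
    congr 1
    omega
  have hsorted : ((List.range (2 * N)).map (fun i => f ((i + 1) / 2))).Perm
      ((List.range N).map f ++ (List.range N).map (fun k => f (k + 1))) := by
    refine (perm_map_range_two_mul _ N).trans (.of_eq ?_)
    congr 1 <;> exact List.map_congr_left fun m _ => by congr 1; omega
  rw [hgiven]
  exact (List.perm_append_comm.trans ((perm_map_range_reverse f N).append_right _)).trans
    hsorted.symm

/-- `tᵢ` runs through `1, 3, …, 2n-1, 2n-1, 2n+1, …, 4n-3`; the repeated `2n-1` produces the extra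
eigenvalue `0 = 2cos(π/2)` of `Z_{2n}`. -/
def treeIndex (n i : ℕ) : ℕ := if i < n then 2 * i + 1 else 2 * i - 1

lemma treeIndex_mono (n : ℕ) : Monotone (treeIndex n) := by
  intro a b h
  unfold treeIndex
  split_ifs <;> omega

lemma perm_map_range_treeIndex {α : Type*} (g : ℕ → α) {N : ℕ} (hN : 1 ≤ N) :
    (g (2 * N - 1) :: (List.range (2 * N - 1)).map (fun k => g (2 * k + 1))).Perm
      ((List.range (2 * N)).map (fun i => g (treeIndex N i))) := by
  have hgiven : (List.range (2 * N - 1)).map (fun k => g (2 * k + 1)) =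
      (List.range N).map (fun k => g (2 * k + 1)) ++
        (List.range (N - 1)).map (fun k => g (2 * (N + k) + 1)) := by
    rw [show 2 * N - 1 = N + (N - 1) by omega, List.range_add, List.map_append, List.map_map]
    rfl
  have hsorted : (List.range (2 * N)).map (fun i => g (treeIndex N i)) =
      (List.range N).map (fun k => g (2 * k + 1)) ++
        g (2 * N - 1) :: (List.range (N - 1)).map (fun k => g (2 * (N + k) + 1)) := by
    rw [show 2 * N = N + 1 + (N - 1) by omega, List.range_add, List.range_succ]
    simp only [List.map_append, List.map_map, List.map_cons, List.append_assoc,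
      List.singleton_append]
    congr 1
    · exact List.map_congr_left fun i hi => by simp [treeIndex, List.mem_range.1 hi]
    · congr 1
      · rw [treeIndex, if_neg (lt_irrefl N)]
        congr 1
        omega
      · exact List.map_congr_left fun k _ => by
          simp only [Function.comp_apply, treeIndex]
          rw [if_neg (by omega)]
          congr 1
          omega
  rw [hgiven, hsorted]
  exact List.perm_middle.symm

lemma treeIndex_add_two_le {n i : ℕ} (hi : i < 2 * n) : treeIndex n i + 2 ≤ 4 * n := by
  unfold treeIndex
  split_ifs <;> omega

lemma treeIndex_add_treeIndex_reflect {n i : ℕ} (hi : i < n) :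
    treeIndex n i + treeIndex n (2 * n - 1 - i) + 2 = 4 * n := by
  unfold treeIndex
  split_ifs <;> omega

lemma sum_range_abs_of_reflect {N : ℕ} {f : ℕ → ℝ} (hf : ∀ i < N, f (2 * N - 1 - i) = -f i) :
    ∑ i ∈ range (2 * N), |f i| = 2 * ∑ i ∈ range N, |f i| := by
  rw [two_mul N, sum_range_add, two_mul]
  congr 1
  rw [← sum_range_reflect (fun i => |f i|) N]
  refine sum_congr rfl fun i hi => ?_
  have hi := mem_range.1 hi
  rw [← abs_neg (f (N - 1 - i)), ← hf (N - 1 - i) (by omega)]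
  congr 2
  omega

lemma sum_range_two_mul_neg_one_pow_mul_div_two (f : ℕ → ℝ) (m : ℕ) :
    ∑ i ∈ range (2 * m), (-1) ^ i * f ((i + 1) / 2) = f 0 - f m := by
  induction m with
  | zero => simp
  | succ m ih =>
    rw [show 2 * (m + 1) = 2 * m + 1 + 1 by ring, sum_range_succ, sum_range_succ, ih,
      show (2 * m + 1) / 2 = m by omega, show (2 * m + 1 + 1) / 2 = m + 1 by omega, pow_succ,
      (even_two_mul m).neg_one_pow]
    ring

noncomputable def sortedCycleEigenvalue (n i : ℕ) : ℝ := twoCosPiDiv n ((i + 1) / 2)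

noncomputable def sortedTreeEigenvalue (n i : ℕ) : ℝ := twoCosPiDiv (4 * n - 2) (treeIndex n i)

section eigenvalues

variable {n : ℕ}

lemma perm_sortedCycleEigenvalue (hn : 1 ≤ n) :
    ((List.range (2 * n)).map fun k : ℕ => 2 * cos (2 * ((k : ℝ) + 1) * π / (2 * n))).Perm
      ((List.range (2 * n)).map (sortedCycleEigenvalue n)) := by
  have hn0 : (n : ℝ) ≠ 0 := by positivity
  have hangle : ∀ k : ℕ, 2 * cos (2 * ((k : ℝ) + 1) * π / (2 * n)) = twoCosPiDiv n (k + 1) :=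
    fun k => by
      rw [twoCosPiDiv]
      congr 2
      push_cast
      field_simp
  simp only [hangle]
  exact perm_map_range_succ_of_reflect fun j hj =>
    twoCosPiDiv_of_add_eq_two_mul hn0 (by rw [Nat.cast_sub (by omega)]; push_cast; ring)

lemma perm_sortedTreeEigenvalue (hn : 1 ≤ n) :
    ((0 : ℝ) :: (List.range (2 * n - 1)).map
        fun k : ℕ => 2 * cos ((2 * ((k : ℝ) + 1) - 1) * π / (4 * n - 2))).Perm
      ((List.range (2 * n)).map (sortedTreeEigenvalue n)) := by
  have hd : (4 * n - 2 : ℝ) ≠ 0 := by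
    have : (1 : ℝ) ≤ n := by exact_mod_cast hn
    linarith
  have hangle : ∀ k : ℕ, 2 * cos ((2 * ((k : ℝ) + 1) - 1) * π / (4 * n - 2)) =
      twoCosPiDiv (4 * n - 2) (2 * k + 1) :=
    fun k => by
      rw [twoCosPiDiv]
      push_cast
      ring_nf
  have hzero : twoCosPiDiv (4 * n - 2) (2 * n - 1) = 0 :=
    twoCosPiDiv_of_two_mul_eq hd (by rw [Nat.cast_sub (by omega)]; push_cast; ring)
  simp only [hangle]
  rw [← hzero]
  exact perm_map_range_treeIndex _ hn

lemma pairwise_sortedCycleEigenvalue (hn : 1 ≤ n) :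
    ((List.range (2 * n)).map (sortedCycleEigenvalue n)).Pairwise (· ≥ ·) :=
  pairwise_ge_map_range fun i j hij hj =>
    twoCosPiDiv_anti (by positivity) (by omega) (by exact_mod_cast (by omega : (j + 1) / 2 ≤ n))

lemma pairwise_sortedTreeEigenvalue (hn : 1 ≤ n) :
    ((List.range (2 * n)).map (sortedTreeEigenvalue n)).Pairwise (· ≥ ·) := by
  have hn' : (1 : ℝ) ≤ n := by exact_mod_cast hn
  refine pairwise_ge_map_range fun i j hij hj => twoCosPiDiv_anti (by linarith)
    (treeIndex_mono n hij) ?_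
  have := (Nat.cast_le (α := ℝ)).2 (treeIndex_add_two_le hj)
  push_cast at this
  linarith

lemma sortedCycleEigenvalue_reflect {i : ℕ} (hi : i < n) :
    sortedCycleEigenvalue n (2 * n - 1 - i) = -sortedCycleEigenvalue n i :=
  twoCosPiDiv_of_add_eq (Nat.cast_ne_zero.2 (by omega)) (by exact_mod_cast (by omega :
    (i + 1) / 2 + (2 * n - 1 - i + 1) / 2 = n))

lemma sortedTreeEigenvalue_reflect {i : ℕ} (hi : i < n) :
    sortedTreeEigenvalue n (2 * n - 1 - i) = -sortedTreeEigenvalue n i := by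
  have := congrArg (Nat.cast (R := ℝ)) (treeIndex_add_treeIndex_reflect hi)
  push_cast at this
  have hn : (1 : ℝ) ≤ n := by exact_mod_cast (by omega : 1 ≤ n)
  exact twoCosPiDiv_of_add_eq (by linarith) (by linarith)

lemma abs_sortedCycleEigenvalue_sub_sortedTreeEigenvalue {i : ℕ} (hi : i < n) :
    |sortedCycleEigenvalue n i - sortedTreeEigenvalue n i| =
      (-1) ^ i * (sortedCycleEigenvalue n i - sortedTreeEigenvalue n i) := by
  rw [sortedCycleEigenvalue, sortedTreeEigenvalue, treeIndex, if_pos hi]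
  rcases Nat.even_or_odd' i with ⟨m, rfl | rfl⟩
  · have hm : (2 * m + 1 : ℝ) ≤ n := by exact_mod_cast (by omega : 2 * m + 1 ≤ n)
    have hle : twoCosPiDiv (4 * n - 2) (2 * (2 * m) + 1) ≤ twoCosPiDiv n m :=
      twoCosPiDiv_le_twoCosPiDiv (by linarith) (by linarith) (by push_cast; nlinarith)
        (by push_cast; linarith)
    rw [show (2 * m + 1) / 2 = m by omega, abs_of_nonneg (sub_nonneg.2 hle),
      (even_two_mul m).neg_one_pow, one_mul]
  · have hm : (2 * m + 2 : ℝ) ≤ n := by exact_mod_cast (by omega : 2 * m + 2 ≤ n)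
    have hle : twoCosPiDiv n (m + 1) ≤ twoCosPiDiv (4 * n - 2) (2 * (2 * m + 1) + 1) :=
      twoCosPiDiv_le_twoCosPiDiv (by linarith) (by linarith) (by push_cast; nlinarith)
        (by push_cast; linarith)
    rw [show (2 * m + 1 + 1) / 2 = m + 1 by omega, abs_of_nonpos (sub_nonpos.2 hle),
      (odd_two_mul_add_one m).neg_one_pow]
    ring

lemma sum_range_neg_one_pow_mul_sortedCycleEigenvalue (hn : 1 ≤ n) :
    ∑ i ∈ range n, (-1) ^ i * sortedCycleEigenvalue n i = 2 := by
  have hn0 : (n : ℝ) ≠ 0 := Nat.cast_ne_zero.2 (by omega)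
  change ∑ i ∈ range n, (-1) ^ i * twoCosPiDiv n ((i + 1) / 2) = 2
  rcases Nat.even_or_odd' n with ⟨m, rfl | rfl⟩
  · rw [sum_range_two_mul_neg_one_pow_mul_div_two, twoCosPiDiv_zero,
      twoCosPiDiv_of_two_mul_eq hn0 (by push_cast; ring), sub_zero]
  · rw [sum_range_succ, sum_range_two_mul_neg_one_pow_mul_div_two,
      show (2 * m + 1) / 2 = m by omega, (even_two_mul m).neg_one_pow, twoCosPiDiv_zero]
    ring

lemma sum_range_neg_one_pow_mul_sortedTreeEigenvalue (hn : 1 ≤ n) :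
    ∑ i ∈ range n, (-1) ^ i * sortedTreeEigenvalue n i =
      -2 * ∑ k ∈ Icc 1 (n - 1), (-1) ^ k * cos ((2 * (k : ℝ) - 1) * π / (4 * n - 2)) := by
  obtain ⟨m, rfl⟩ : ∃ m, n = m + 1 := ⟨n - 1, by omega⟩
  have hlast : sortedTreeEigenvalue (m + 1) m = 0 := by
    rw [sortedTreeEigenvalue, treeIndex, if_pos (by omega)]
    exact twoCosPiDiv_of_two_mul_eq (by push_cast; linarith) (by push_cast; ring)
  rw [sum_range_succ, hlast, mul_zero, add_zero, Nat.add_sub_cancel, ← Ico_add_one_right_eq_Icc,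
    sum_Ico_eq_sum_range, Nat.add_sub_cancel, mul_sum]
  refine sum_congr rfl fun i hi => ?_
  rw [sortedTreeEigenvalue, treeIndex, if_pos (by have := mem_range.1 hi; omega), twoCosPiDiv]
  push_cast
  ring_nf

end eigenvalues

theorem stmt18 (n : ℕ) (hn : 2 ≤ n) (c z : List ℝ)
    (hc : c.Perm ((List.range (2 * n)).map
      (fun k => 2 * Real.cos (2 * ((k : ℝ) + 1) * Real.pi / (2 * (n : ℝ))))))
    (hz : z.Perm ((0 : ℝ) :: (List.range (2 * n - 1)).map
      (fun k => 2 * Real.cos ((2 * ((k : ℝ) + 1) - 1) * Real.pi / (4 * (n : ℝ) - 2)))))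
    (hcs : c.Pairwise (· ≥ ·)) (hzs : z.Pairwise (· ≥ ·)) :
    (List.zipWith (fun a b => |a - b|) c z).sum =
      4 * ∑ k ∈ Finset.Icc 1 (n - 1),
        (-1 : ℝ) ^ k * Real.cos ((2 * (k : ℝ) - 1) * Real.pi / (4 * (n : ℝ) - 2)) + 4 := by
  have hn1 : 1 ≤ n := by omega
  -- `(k : ℝ)` in the statement elaborates `List.range m` as a monadic coercion to `List ℝ`.
  simp only [List.pure_def, List.bind_eq_flatMap, ← List.map_eq_flatMap, List.map_map,
    Function.comp_def] at hc hz
  obtain rfl := (hc.trans (perm_sortedCycleEigenvalue hn1)).eq_of_pairwise' hcs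
    (pairwise_sortedCycleEigenvalue hn1)
  obtain rfl := (hz.trans (perm_sortedTreeEigenvalue hn1)).eq_of_pairwise' hzs
    (pairwise_sortedTreeEigenvalue hn1)
  rw [List.zipWith_map, List.zipWith_self]
  calc _ = ∑ i ∈ range (2 * n), |sortedCycleEigenvalue n i - sortedTreeEigenvalue n i| := rfl
    _ = 2 * ∑ i ∈ range n, |sortedCycleEigenvalue n i - sortedTreeEigenvalue n i| :=
      sum_range_abs_of_reflect fun i hi => by
        rw [sortedCycleEigenvalue_reflect hi, sortedTreeEigenvalue_reflect hi, neg_sub_neg, neg_sub]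
    _ = 2 * ∑ i ∈ range n, (-1) ^ i * (sortedCycleEigenvalue n i - sortedTreeEigenvalue n i) := by
      rw [sum_congr rfl fun i hi =>
        abs_sortedCycleEigenvalue_sub_sortedTreeEigenvalue (mem_range.1 hi)]
    _ = _ := by
      rw [sum_congr rfl fun i _ => mul_sub _ _ _, sum_sub_distrib,
        sum_range_neg_one_pow_mul_sortedCycleEigenvalue hn1,
        sum_range_neg_one_pow_mul_sortedTreeEigenvalue hn1]
      ring
end
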